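/- arXiv:2501.16569 — 2 statements merged into one kernel-verified Lean document; each statement's English description precedes it below -/
import Mathlib

section
/- For every real number α with 0 ≤ α < 1, the Wright-type series M_α(z) = Σ_{n=0}^∞ (−z)^n / (n! Γ(−αn + 1 − α)) converges absolutely for every z ∈ ℂ (so M_α defines an entire function on ℂ). Here terms with −αn + 1 − α a nonpositive integer are interpreted as 0 (equivalently, 1/Γ is the entire reciprocal Gamma function). -/
/-!
By the reflection formula, `|1/Γ(x)| ≤ Γ(2 - x)` for `x ≤ 1`, so the `n`-th coefficient of `M_α`
is at most `Γ(1 + α(n+1)) / n!`. Log-convexity of `Γ` gives `Γ(1 + αm) ≤ (m!)^α`, which bounds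
the coefficient by `2ⁿ / (n!)^(1-α)`. Since `1 - α > 0` this decays faster than any geometric
sequence, so the power series converges absolutely and locally uniformly on all of `ℂ`.
-/

/-- The Wright-type function `M_α(z) = ∑_{n=0}^∞ (−z)^n / (n! Γ(−αn + 1 − α))`,
where `1/Γ` is the entire reciprocal Gamma function (Mathlib's `Complex.Gamma`
vanishes at the nonpositive integers, so `(Complex.Gamma w)⁻¹` is the entire
reciprocal Gamma function). -/
noncomputable def wrightM (α : ℝ) (z : ℂ) : ℂ :=
  ∑' n : ℕ, (-z) ^ n / (n.factorial : ℂ) * (Complex.Gamma ((-α * n + 1 - α : ℝ) : ℂ))⁻¹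

open scoped Nat

namespace Real

theorem abs_inv_Gamma_le_Gamma_two_sub {x : ℝ} (hx : x ≤ 1) : |(Gamma x)⁻¹| ≤ Gamma (2 - x) := by
  rcases hx.eq_or_lt with rfl | hx
  · norm_num
  have hpos : 0 < Gamma (1 - x) := Gamma_pos_of_pos (by linarith)
  rcases eq_or_ne (Gamma x) 0 with hΓ | hΓ
  · rw [hΓ, inv_zero, abs_zero]
    exact (Gamma_pos_of_pos (by linarith)).le
  have hreflection := Gamma_mul_Gamma_one_sub x
  have hsin : sin (π * x) ≠ 0 := by
    intro h0
    rw [h0, div_zero] at hreflection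
    exact mul_ne_zero hΓ hpos.ne' hreflection
  have hinv : (Gamma x)⁻¹ = Gamma (1 - x) * sin (π * x) / π := by
    rw [eq_div_iff pi_ne_zero, inv_mul_eq_iff_eq_mul₀ hΓ, ← mul_assoc, hreflection,
      div_mul_cancel₀ _ hsin]
  have hsin_le : |sin (π * x)| ≤ π * (1 - x) :=
    calc |sin (π * x)| = |sin (π * (1 - x))| := by rw [mul_one_sub, sin_pi_sub]
      _ ≤ |π * (1 - x)| := abs_sin_le_abs
      _ = π * (1 - x) := abs_of_pos (mul_pos pi_pos (by linarith))
  calc |(Gamma x)⁻¹| = Gamma (1 - x) * |sin (π * x)| / π := by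
        rw [hinv, abs_div, abs_mul, abs_of_pos hpos, abs_of_pos pi_pos]
    _ ≤ Gamma (1 - x) * (π * (1 - x)) / π := by gcongr
    _ = (1 - x) * Gamma (1 - x) := by field_simp
    _ = Gamma (2 - x) := by rw [show 2 - x = 1 - x + 1 by ring, Gamma_add_one (by linarith)]

theorem Gamma_mul_add_one_le_factorial_rpow {α : ℝ} (hα0 : 0 ≤ α) (hα1 : α ≤ 1) (m : ℕ) :
    Gamma (α * m + 1) ≤ (m ! : ℝ) ^ α := by
  have hconv := convexOn_log_Gamma.2 (x := m + 1) (y := 1) (Set.mem_Ioi.2 (by positivity))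
    (Set.mem_Ioi.2 one_pos) hα0 (sub_nonneg.2 hα1) (add_sub_cancel α 1)
  have harg : α * ((m : ℝ) + 1) + (1 - α) * 1 = α * m + 1 := by ring
  simp only [Function.comp, smul_eq_mul, Gamma_one, log_one, mul_zero, add_zero,
    Gamma_nat_eq_factorial, harg] at hconv
  rw [rpow_def_of_pos (by positivity), ← exp_log (Gamma_pos_of_pos (by positivity))]
  exact exp_le_exp.2 (by linarith)

theorem summable_pow_div_factorial_rpow {β : ℝ} (hβ : 0 < β) {r : ℝ} (hr : 0 ≤ r) :
    Summable fun n : ℕ => r ^ n / (n ! : ℝ) ^ β := by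
  -- `c ^ β = 2 * r`, and `c ^ n / n! → 0`
  set c := (2 * r) ^ β⁻¹
  have hc : 0 ≤ c := by positivity
  have hterm (n : ℕ) : r ^ n / (n ! : ℝ) ^ β = (1 / 2) ^ n * (c ^ n / n !) ^ β := by
    rw [div_rpow (by positivity) (by positivity), ← rpow_pow_comm hc,
      rpow_inv_rpow (by positivity) hβ.ne', mul_pow, ← mul_div_assoc, ← mul_assoc, ← mul_pow]
    norm_num
  refine summable_geometric_two.of_norm_bounded_eventually_nat ?_
  filter_upwards [(FloorSemiring.tendsto_pow_div_factorial_atTop c).eventually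
    (ge_mem_nhds one_pos)] with n hn
  rw [hterm, norm_of_nonneg (by positivity)]
  exact mul_le_of_le_one_right (by positivity) (rpow_le_one (by positivity) hn hβ.le)

end Real

theorem Complex.differentiable_tsum_mul_pow {a : ℕ → ℂ}
    (ha : ∀ r : ℝ, 0 ≤ r → Summable fun n => ‖a n‖ * r ^ n) :
    Differentiable ℂ fun z => ∑' n, a n * z ^ n := by
  intro z
  have hU : IsOpen (Metric.ball (0 : ℂ) (‖z‖ + 1)) := Metric.isOpen_ball
  have hz : z ∈ Metric.ball (0 : ℂ) (‖z‖ + 1) := by simp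
  have hdiff := differentiableOn_tsum_of_summable_norm (F := fun n w => a n * w ^ n)
    (ha (‖z‖ + 1) (by positivity)) (fun n => by fun_prop) hU
    (fun n w hw => by
      rw [norm_mul, norm_pow]
      gcongr
      exact (mem_ball_zero_iff.1 hw).le)
  exact (hdiff z hz).differentiableAt (hU.mem_nhds hz)

noncomputable def wrightCoeff (α : ℝ) (n : ℕ) : ℂ :=
  (-1) ^ n / (n ! : ℂ) * (Complex.Gamma ((-α * n + 1 - α : ℝ) : ℂ))⁻¹

theorem wrightCoeff_mul_pow (α : ℝ) (z : ℂ) (n : ℕ) :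
    wrightCoeff α n * z ^ n =
      (-z) ^ n / (n ! : ℂ) * (Complex.Gamma ((-α * n + 1 - α : ℝ) : ℂ))⁻¹ := by
  rw [wrightCoeff, neg_pow]
  ring

theorem norm_wrightCoeff_le {α : ℝ} (hα0 : 0 ≤ α) (hα1 : α ≤ 1) (n : ℕ) :
    ‖wrightCoeff α n‖ ≤ 2 ^ n / (n ! : ℝ) ^ (1 - α) := by
  have hfac : (0 : ℝ) < n ! := by positivity
  calc ‖wrightCoeff α n‖ = |(Real.Gamma (-α * n + 1 - α))⁻¹| / n ! := by
        simp only [wrightCoeff, norm_mul, norm_div, norm_pow, norm_neg, norm_one, one_pow,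
          Complex.norm_natCast, norm_inv, Complex.Gamma_ofReal, Complex.norm_real,
          Real.norm_eq_abs, abs_inv]
        ring
    _ ≤ Real.Gamma (α * (n + 1 : ℕ) + 1) / n ! := by
        gcongr
        exact (Real.abs_inv_Gamma_le_Gamma_two_sub (by nlinarith)).trans_eq
          (congrArg Real.Gamma (by push_cast; ring))
    _ ≤ ((n + 1)! : ℝ) ^ α / n ! := by
        gcongr
        exact Real.Gamma_mul_add_one_le_factorial_rpow hα0 hα1 _
    _ = (n + 1 : ℝ) ^ α * (n ! : ℝ) ^ α / n ! := by
        rw [Nat.factorial_succ, Nat.cast_mul, Real.mul_rpow (by positivity) hfac.le]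
        push_cast
        rfl
    _ ≤ 2 ^ n * (n ! : ℝ) ^ α / n ! := by
        gcongr
        calc (n + 1 : ℝ) ^ α ≤ n + 1 :=
              Real.rpow_le_self_of_one_le (by linarith [n.cast_nonneg (α := ℝ)]) hα1
          _ ≤ 2 ^ n := by exact_mod_cast Nat.lt_two_pow_self
    _ = 2 ^ n / (n ! : ℝ) ^ (1 - α) := by
        rw [Real.rpow_sub hfac, Real.rpow_one]
        field_simp

theorem summable_norm_wrightCoeff_mul_pow {α : ℝ} (hα0 : 0 ≤ α) (hα1 : α < 1) {r : ℝ}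
    (hr : 0 ≤ r) : Summable fun n => ‖wrightCoeff α n‖ * r ^ n := by
  refine (Real.summable_pow_div_factorial_rpow (sub_pos.2 hα1)
    (by positivity : 0 ≤ 2 * r)).of_nonneg_of_le (fun n => by positivity) fun n => ?_
  calc ‖wrightCoeff α n‖ * r ^ n ≤ 2 ^ n / (n ! : ℝ) ^ (1 - α) * r ^ n := by
        gcongr
        exact norm_wrightCoeff_le hα0 hα1.le n
    _ = (2 * r) ^ n / (n ! : ℝ) ^ (1 - α) := by ring

/-- For every real `0 ≤ α < 1`, the Wright-type series converges absolutely for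
every `z ∈ ℂ`, so `M_α` defines an entire function on `ℂ`. -/
theorem wrightM_abs_convergent_entire (α : ℝ) (hα0 : 0 ≤ α) (hα1 : α < 1) :
    (∀ z : ℂ, Summable fun n : ℕ =>
        ‖(-z) ^ n / (n.factorial : ℂ) * (Complex.Gamma ((-α * n + 1 - α : ℝ) : ℂ))⁻¹‖) ∧
      Differentiable ℂ (wrightM α) := by
  have hsum := fun r (hr : 0 ≤ r) => summable_norm_wrightCoeff_mul_pow hα0 hα1 hr
  refine ⟨fun z => ?_, ?_⟩
  · simpa only [← wrightCoeff_mul_pow, norm_mul, norm_pow] using hsum _ (norm_nonneg z)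
  · have hM : wrightM α = fun z => ∑' n, wrightCoeff α n * z ^ n := by
      funext z
      simp only [wrightM, wrightCoeff_mul_pow]
    rw [hM]
    exact Complex.differentiable_tsum_mul_pow hsum
end

section
/- Let 0 < α < 1 and λ ≥ 0, and define u(t) = E_α(−λ t^α) for t ≥ 0. Then u(0) = 1, u is differentiable on (0, +∞), and for every t > 0 the Djrbashian–Caputo fractional derivative of u exists and satisfies (^C∂_t^α u)(t) := (1/Γ(1−α)) ∫_0^t (t − s)^{−α} u′(s) ds = −λ u(t). -/
/-!
Write `c = -λ` and `φ_p(t) = t^p / Γ(p + 1)`, so that `u = ∑ₖ cᵏ φ_{αk}`. For `p > 0` the Beta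
integral gives `^C∂^α φ_p = φ_{p-α}`, while `φ_0 = 1` has derivative zero; hence, termwise,
`^C∂^α u = ∑_{k ≥ 1} cᵏ φ_{α(k-1)} = c u`. Termwise differentiation and integration are justified
by the absolute convergence of `∑ₖ xᵏ / Γ(αk + β)`, which follows from the ratio test because
log-convexity of `Γ` gives `Γ(x) / Γ(x + α) → 0`.
-/

open MeasureTheory intervalIntegral

/-- The Mittag-Leffler function `E_α(x) = ∑_{k=0}^∞ x^k / Γ(αk + 1)` for real `x`. -/
noncomputable def mittagLefflerReal (α : ℝ) (x : ℝ) : ℝ :=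
  ∑' k : ℕ, x ^ k / Real.Gamma (α * k + 1)

open Real Filter Topology Set

theorem Real.mul_Gamma_le_Gamma_add_mul_rpow {α x : ℝ} (hα0 : 0 < α) (hα1 : α < 1)
    (hx : 0 < x) : x * Gamma x ≤ Gamma (x + α) * (x + α) ^ (1 - α) := by
  have hxα : 0 < x + α := by linarith
  have hG : 0 ≤ Gamma (x + α) := (Gamma_pos_of_pos hxα).le
  have key := Gamma_mul_add_mul_le_rpow_Gamma_mul_rpow_Gamma hxα (by linarith : 0 < x + α + 1)
    hα0 (sub_pos.2 hα1) (add_sub_cancel α 1)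
  rw [show α * (x + α) + (1 - α) * (x + α + 1) = x + 1 by ring, Gamma_add_one hx.ne',
    Gamma_add_one hxα.ne', mul_rpow hxα.le hG, mul_left_comm, ← rpow_add' hG (by simp),
    add_sub_cancel, rpow_one] at key
  rwa [mul_comm (Gamma (x + α))]

theorem Real.tendsto_Gamma_div_Gamma_add_atTop_zero {α : ℝ} (hα0 : 0 < α) (hα1 : α < 1) :
    Tendsto (fun x => Gamma x / Gamma (x + α)) atTop (𝓝 0) := by
  have hlim : Tendsto (fun x : ℝ => (x + α) ^ (-α) * (1 + α / x)) atTop (𝓝 0) := by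
    have h1 := (tendsto_rpow_neg_atTop hα0).comp (tendsto_atTop_add_const_right _ α tendsto_id)
    simpa using h1.mul (tendsto_const_nhds.add (tendsto_const_nhds.div_atTop tendsto_id))
  refine tendsto_of_tendsto_of_tendsto_of_le_of_le' tendsto_const_nhds hlim ?_ ?_
  all_goals filter_upwards [eventually_gt_atTop 0] with x hx
  · exact div_nonneg (Gamma_pos_of_pos hx).le (Gamma_pos_of_pos (by linarith)).le
  · have hxα : 0 < x + α := by linarith
    rw [div_le_iff₀ (Gamma_pos_of_pos hxα)]
    calc Gamma x = x * Gamma x / x := by field_simp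
      _ ≤ Gamma (x + α) * (x + α) ^ (1 - α) / x :=
        div_le_div_of_nonneg_right (mul_Gamma_le_Gamma_add_mul_rpow hα0 hα1 hx) hx.le
      _ = (x + α) ^ (-α) * (1 + α / x) * Gamma (x + α) := by
        rw [sub_eq_add_neg, rpow_add hxα, rpow_one]; field_simp

theorem summable_pow_div_Gamma_mul_add {α r : ℝ} (hα0 : 0 < α) (hα1 : α < 1) (hr : 0 < r) (c : ℝ) :
    Summable fun k : ℕ => c ^ k / Gamma (α * k + r) := by
  rcases eq_or_ne c 0 with rfl | hc
  · exact summable_of_ne_finset_zero (s := {0}) fun k hk => by simp_all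
  have hGpos (k : ℕ) : 0 < Gamma (α * k + r) := Gamma_pos_of_pos (by positivity)
  refine summable_of_ratio_test_tendsto_lt_one zero_lt_one
    (Eventually.of_forall fun k => div_ne_zero (pow_ne_zero k hc) (hGpos k).ne') ?_
  have hx : Tendsto (fun k : ℕ => α * k + r) atTop atTop :=
    tendsto_atTop_add_const_right _ r (tendsto_natCast_atTop_atTop.const_mul_atTop hα0)
  have := ((tendsto_Gamma_div_Gamma_add_atTop_zero hα0 hα1).comp hx).const_mul |c|
  rw [mul_zero] at this
  refine this.congr fun k => ?_
  have hG1 := hGpos (k + 1)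
  push_cast at hG1 ⊢
  rw [show α * (k + 1) + r = α * k + r + α by ring] at hG1 ⊢
  simp only [Function.comp_apply, norm_div, norm_pow, Real.norm_eq_abs, abs_of_pos hG1,
    abs_of_pos (hGpos k)]
  field_simp
  ring

theorem Real.mul_rpow_pow (c : ℝ) {t : ℝ} (ht : 0 ≤ t) (α : ℝ) (k : ℕ) :
    (c * t ^ α) ^ k = c ^ k * t ^ (α * k) := by
  rw [mul_pow, ← rpow_natCast (t ^ α), ← rpow_mul ht]

theorem hasSum_integral_const_mul_of_nonneg {ι X : Type*} [Countable ι] [MeasurableSpace X]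
    {μ : Measure X} {a : ι → ℝ} {g : ι → X → ℝ} (hg : ∀ i, 0 ≤ᵐ[μ] g i)
    (hgi : ∀ i, Integrable (g i) μ) (hs : Summable fun i => |a i| * ∫ x, g i x ∂μ) :
    HasSum (fun i => a i * ∫ x, g i x ∂μ) (∫ x, ∑' i, a i * g i x ∂μ) := by
  have hnorm (i : ι) : |a i| * ∫ x, g i x ∂μ = ∫ x, ‖a i * g i x‖ ∂μ := by
    simp_rw [norm_mul, MeasureTheory.integral_const_mul, Real.norm_eq_abs]
    congr 1
    exact integral_congr_ae ((hg i).mono fun x hx => (abs_of_nonneg hx).symm)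
  simpa only [MeasureTheory.integral_const_mul] using hasSum_integral_of_summable_integral_norm
    (fun i => (hgi i).const_mul (a i)) (hs.congr hnorm)

theorem integral_rpow_mul_sub_rpow {p q t : ℝ} (hp : 0 < p) (hq : 0 < q) (ht : 0 < t) :
    ∫ s in 0..t, s ^ (p - 1) * (t - s) ^ (q - 1) =
      Gamma p * Gamma q / Gamma (p + q) * t ^ (p + q - 1) := by
  have hB := Complex.Gamma_mul_Gamma_eq_betaIntegral (s := p) (t := q) (by simpa) (by simpa)
  have hscaled := Complex.betaIntegral_scaled p q ht
  rw [← Complex.ofReal_add, Complex.Gamma_ofReal, Complex.Gamma_ofReal,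
    Complex.Gamma_ofReal] at hB
  have hpow : (t : ℂ) ^ ((p : ℂ) + q - 1) = ((t ^ (p + q - 1) : ℝ) : ℂ) := by
    rw [Complex.ofReal_cpow ht.le]; push_cast; rfl
  rw [integral_congr (g := fun x : ℝ => ((x ^ (p - 1) * (t - x) ^ (q - 1) : ℝ) : ℂ)) ?_,
    integral_ofReal, hpow] at hscaled
  · have hG : Gamma (p + q) ≠ 0 := (Gamma_pos_of_pos (by positivity)).ne'
    apply Complex.ofReal_injective
    push_cast
    rw [hscaled, hB, mul_div_cancel_left₀ _ (by exact_mod_cast hG), mul_comm]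
  · intro x hx
    rw [uIcc_of_le ht.le] at hx
    simp only
    rw [Complex.ofReal_mul, Complex.ofReal_cpow hx.1, Complex.ofReal_cpow (sub_nonneg.2 hx.2)]
    push_cast; rfl

theorem integral_sub_rpow_mul_rpow_div_Gamma {α p t : ℝ} (hα : α < 1) (hp : 0 < p)
    (ht : 0 < t) :
    ∫ s in 0..t, (t - s) ^ (-α) * (s ^ (p - 1) / Gamma p) =
      Gamma (1 - α) * (t ^ (p - α) / Gamma (p - α + 1)) := by
  have hbeta := integral_rpow_mul_sub_rpow hp (sub_pos.2 hα) ht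
  rw [show p + (1 - α) = p - α + 1 by ring, show p - α + 1 - 1 = p - α by ring,
    sub_sub_cancel_left] at hbeta
  have hG := (Gamma_pos_of_pos hp).ne'
  calc ∫ s in 0..t, (t - s) ^ (-α) * (s ^ (p - 1) / Gamma p)
      = (∫ s in 0..t, s ^ (p - 1) * (t - s) ^ (-α)) / Gamma p := by
        rw [← intervalIntegral.integral_div]; congr 1; ext s; ring
    _ = _ := by rw [hbeta]; field_simp

/-- A function that is not integrable has integral `0`, so the nonzero value of the integral
computed above already forces integrability. -/
theorem intervalIntegrable_sub_rpow_mul_rpow_div_Gamma {α p t : ℝ} (hα : α < 1) (hp : 0 < p)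
    (ht : 0 < t) :
    IntervalIntegrable (fun s => (t - s) ^ (-α) * (s ^ (p - 1) / Gamma p)) volume 0 t :=
  intervalIntegrable_of_integral_ne_zero <| by
    rw [integral_sub_rpow_mul_rpow_div_Gamma hα hp ht]
    have := Gamma_pos_of_pos (sub_pos.2 hα)
    have := Gamma_pos_of_pos (by linarith : 0 < p - α + 1)
    positivity

/-- The two-parameter Mittag-Leffler function `E_{α,β}`, so that
`mittagLefflerReal α = mittagLefflerReal₂ α 1`. -/
noncomputable def mittagLefflerReal₂ (α β x : ℝ) : ℝ :=
  ∑' k : ℕ, x ^ k / Gamma (α * k + β)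

theorem mittagLefflerReal_zero (α : ℝ) : mittagLefflerReal α 0 = 1 := by
  rw [mittagLefflerReal, tsum_eq_single 0 fun k hk => by rw [zero_pow hk, zero_div]]
  simp

theorem abs_mittagLefflerReal₂_le {α β x R : ℝ} (hα0 : 0 < α) (hα1 : α < 1) (hβ : 0 < β)
    (hx : |x| ≤ R) : |mittagLefflerReal₂ α β x| ≤ mittagLefflerReal₂ α β R :=
  tsum_of_norm_bounded (f := fun k : ℕ => x ^ k / Gamma (α * k + β))
    (summable_pow_div_Gamma_mul_add hα0 hα1 hβ R).hasSum fun k => by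
    have := Gamma_pos_of_pos (by positivity : 0 < α * k + β)
    rw [norm_div, norm_pow, norm_of_nonneg this.le]
    gcongr
    exact hx

theorem hasDerivAt_mittagLefflerReal {α : ℝ} (hα0 : 0 < α) (hα1 : α < 1) (x : ℝ) :
    HasDerivAt (mittagLefflerReal α) (mittagLefflerReal₂ α α x / α) x := by
  have hshift : mittagLefflerReal α =
      fun y => 1 + ∑' k : ℕ, y ^ (k + 1) / Gamma (α * (k + 1 : ℕ) + 1) := by
    ext y
    rw [mittagLefflerReal, (summable_pow_div_Gamma_mul_add hα0 hα1 one_pos y).tsum_eq_zero_add]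
    simp
  have hterm (k : ℕ) (y : ℝ) : HasDerivAt (fun y => y ^ (k + 1) / Gamma (α * (k + 1 : ℕ) + 1))
      (y ^ k / Gamma (α * k + α) / α) y := by
    refine ((hasDerivAt_pow (k + 1) y).div_const _).congr_deriv ?_
    have hk : α * (k + 1 : ℕ) ≠ 0 := by positivity
    rw [Gamma_add_one hk]
    push_cast
    rw [show α * (k + 1) = α * k + α by ring]
    field_simp
  have hbound (k : ℕ) (y : ℝ) (hy : y ∈ Metric.ball 0 (|x| + 1)) :
      ‖y ^ k / Gamma (α * k + α) / α‖ ≤ (|x| + 1) ^ k / Gamma (α * k + α) / α := by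
    have := Gamma_pos_of_pos (by positivity : 0 < α * k + α)
    rw [norm_div, norm_div, norm_pow, norm_of_nonneg this.le, norm_of_nonneg hα0.le]
    gcongr
    simpa using (mem_ball_zero_iff.1 hy).le
  rw [hshift, mittagLefflerReal₂, ← tsum_div_const]
  refine (hasDerivAt_tsum_of_isPreconnected
    ((summable_pow_div_Gamma_mul_add hα0 hα1 hα0 _).div_const α) Metric.isOpen_ball
    (convex_ball 0 _).isPreconnected (fun k y _ => hterm k y) hbound
    (Metric.mem_ball_self (by positivity))
    ((summable_nat_add_iff 1).2 (summable_pow_div_Gamma_mul_add hα0 hα1 one_pos 0)) ?_).const_add 1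
  simp

theorem hasDerivAt_mittagLefflerReal_mul_rpow {α : ℝ} (hα0 : 0 < α) (hα1 : α < 1) (c : ℝ)
    {t : ℝ} (ht : 0 < t) :
    HasDerivAt (fun t => mittagLefflerReal α (c * t ^ α))
      (c * t ^ (α - 1) * mittagLefflerReal₂ α α (c * t ^ α)) t :=
  ((hasDerivAt_mittagLefflerReal hα0 hα1 _).comp t
    ((hasDerivAt_rpow_const (Or.inl ht.ne')).const_mul c)).congr_deriv <| by
      field_simp

theorem deriv_mittagLefflerReal_mul_rpow {α : ℝ} (hα0 : 0 < α) (hα1 : α < 1) (c : ℝ)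
    {t : ℝ} (ht : 0 < t) :
    deriv (fun t => mittagLefflerReal α (c * t ^ α)) t =
      c * t ^ (α - 1) * mittagLefflerReal₂ α α (c * t ^ α) :=
  (hasDerivAt_mittagLefflerReal_mul_rpow hα0 hα1 c ht).deriv

theorem intervalIntegrable_sub_rpow_mul_deriv_mittagLefflerReal {α : ℝ} (hα0 : 0 < α)
    (hα1 : α < 1) (c : ℝ) {t : ℝ} (ht : 0 < t) :
    IntervalIntegrable
      (fun s => (t - s) ^ (-α) * deriv (fun r => mittagLefflerReal α (c * r ^ α)) s)
      volume 0 t := by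
  let M := |c| * mittagLefflerReal₂ α α (|c| * t ^ α)
  have hGα := Gamma_pos_of_pos hα0
  refine ((intervalIntegrable_sub_rpow_mul_rpow_div_Gamma hα1 hα0 ht).const_mul
    (M * Gamma α)).mono_fun' ?_ ?_
  · exact (((measurable_const.sub measurable_id).pow_const _).mul
      (measurable_deriv _)).aestronglyMeasurable
  rw [uIoc_of_le ht.le]
  refine (ae_restrict_mem measurableSet_Ioc).mono fun s ⟨hs0, hst⟩ => ?_
  have hE : |mittagLefflerReal₂ α α (c * s ^ α)| ≤ mittagLefflerReal₂ α α (|c| * t ^ α) := by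
    refine abs_mittagLefflerReal₂_le hα0 hα1 hα0 ?_
    rw [abs_mul, abs_of_nonneg (rpow_nonneg hs0.le _)]
    gcongr
  have hts : 0 ≤ (t - s) ^ (-α) := rpow_nonneg (sub_nonneg.2 hst) _
  dsimp only
  rw [deriv_mittagLefflerReal_mul_rpow hα0 hα1 c hs0, norm_mul, norm_mul, norm_mul,
    norm_of_nonneg hts, norm_of_nonneg (rpow_nonneg hs0.le _), Real.norm_eq_abs, Real.norm_eq_abs]
  calc (t - s) ^ (-α) * (|c| * s ^ (α - 1) * |mittagLefflerReal₂ α α (c * s ^ α)|)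
      ≤ (t - s) ^ (-α) * (|c| * s ^ (α - 1) * mittagLefflerReal₂ α α (|c| * t ^ α)) := by
        gcongr
    _ = M * Gamma α * ((t - s) ^ (-α) * (s ^ (α - 1) / Gamma α)) := by
        field_simp
        ring

theorem integral_sub_rpow_mul_deriv_mittagLefflerReal {α : ℝ} (hα0 : 0 < α) (hα1 : α < 1)
    (c : ℝ) {t : ℝ} (ht : 0 < t) :
    ∫ s in 0..t, (t - s) ^ (-α) * deriv (fun r => mittagLefflerReal α (c * r ^ α)) s =
      Gamma (1 - α) * (c * mittagLefflerReal α (c * t ^ α)) := by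
  let g (k : ℕ) (s : ℝ) : ℝ := (t - s) ^ (-α) * (s ^ (α * k + α - 1) / Gamma (α * k + α))
  have hg_int (k : ℕ) :
      ∫ s in 0..t, g k s = Gamma (1 - α) * (t ^ (α * k) / Gamma (α * k + 1)) := by
    rw [integral_sub_rpow_mul_rpow_div_Gamma hα1 (by positivity) ht, add_sub_cancel_right]
  have hderiv : ∀ s ∈ Ioc 0 t,
      (t - s) ^ (-α) * deriv (fun r => mittagLefflerReal α (c * r ^ α)) s =
        ∑' k : ℕ, c ^ (k + 1) * g k s := by
    intro s hs
    rw [deriv_mittagLefflerReal_mul_rpow hα0 hα1 c hs.1, mittagLefflerReal₂, ← tsum_mul_left,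
      ← tsum_mul_left]
    congr 1; ext k
    simp only [g]
    rw [Real.mul_rpow_pow c hs.1.le, show α * k + α - 1 = α * k + (α - 1) by ring,
      rpow_add hs.1]
    ring
  have hsum : HasSum (fun k : ℕ => c ^ (k + 1) * ∫ s in 0..t, g k s)
      (∫ s in 0..t, ∑' k : ℕ, c ^ (k + 1) * g k s) := by
    simp only [intervalIntegral.integral_of_le ht.le]
    refine hasSum_integral_const_mul_of_nonneg (fun k => ?_) (fun k => ?_) ?_
    · refine (ae_restrict_mem measurableSet_Ioc).mono fun s hs => ?_
      have := Gamma_pos_of_pos (by positivity : 0 < α * k + α)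
      exact mul_nonneg (rpow_nonneg (sub_nonneg.2 hs.2) _)
        (div_nonneg (rpow_nonneg hs.1.le _) this.le)
    · exact (intervalIntegrable_sub_rpow_mul_rpow_div_Gamma hα1 (by positivity) ht).1
    · simp_rw [← intervalIntegral.integral_of_le ht.le, hg_int, abs_pow]
      refine ((summable_pow_div_Gamma_mul_add hα0 hα1 one_pos (|c| * t ^ α)).mul_left
        (|c| * Gamma (1 - α))).congr fun k => ?_
      rw [Real.mul_rpow_pow _ ht.le]
      ring
  rw [integral_congr_ae (ae_of_all _ fun s hs => hderiv s (by rwa [uIoc_of_le ht.le] at hs)),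
    ← hsum.tsum_eq, mittagLefflerReal, ← tsum_mul_left, ← tsum_mul_left]
  congr 1; ext k
  rw [hg_int, Real.mul_rpow_pow _ ht.le]
  ring

noncomputable def caputoDeriv (α : ℝ) (u : ℝ → ℝ) (t : ℝ) : ℝ :=
  1 / Gamma (1 - α) * ∫ s in (0 : ℝ)..t, (t - s) ^ (-α) * deriv u s

theorem caputoDeriv_mittagLefflerReal_mul_rpow {α : ℝ} (hα0 : 0 < α) (hα1 : α < 1) (c : ℝ)
    {t : ℝ} (ht : 0 < t) :
    caputoDeriv α (fun t => mittagLefflerReal α (c * t ^ α)) t =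
      c * mittagLefflerReal α (c * t ^ α) := by
  rw [caputoDeriv, integral_sub_rpow_mul_deriv_mittagLefflerReal hα0 hα1 c ht]
  have := (Gamma_pos_of_pos (sub_pos.2 hα1)).ne'
  field_simp

theorem mittagLeffler_solves_caputo_ode_general (α lam : ℝ) (hα0 : 0 < α) (hα1 : α < 1) :
    (fun t : ℝ => mittagLefflerReal α (-(lam * t ^ α))) 0 = 1 ∧
    DifferentiableOn ℝ (fun t : ℝ => mittagLefflerReal α (-(lam * t ^ α))) (Set.Ioi 0) ∧
    ∀ t : ℝ, 0 < t →
      IntervalIntegrable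
        (fun s => (t - s) ^ (-α) *
          deriv (fun r : ℝ => mittagLefflerReal α (-(lam * r ^ α))) s) volume 0 t ∧
      (1 / Real.Gamma (1 - α)) *
          ∫ s in (0 : ℝ)..t, (t - s) ^ (-α) *
            deriv (fun r : ℝ => mittagLefflerReal α (-(lam * r ^ α))) s =
        -lam * mittagLefflerReal α (-(lam * t ^ α)) := by
  simp only [← neg_mul]
  refine ⟨by simp [zero_rpow hα0.ne', mittagLefflerReal_zero], fun t ht => ?_, fun t ht => ?_⟩
  · exact (hasDerivAt_mittagLefflerReal_mul_rpow hα0 hα1 (-lam) ht).differentiableAt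
      |>.differentiableWithinAt
  · exact ⟨intervalIntegrable_sub_rpow_mul_deriv_mittagLefflerReal hα0 hα1 (-lam) ht,
      caputoDeriv_mittagLefflerReal_mul_rpow hα0 hα1 (-lam) ht⟩

/-- For `0 < α < 1` and `λ ≥ 0`, the function `u(t) = E_α(−λ t^α)` satisfies
`u(0) = 1`, is differentiable on `(0, +∞)`, and solves the fractional ODE
`(^C∂_t^α u)(t) = (1/Γ(1−α)) ∫_0^t (t−s)^{−α} u′(s) ds = −λ u(t)` for `t > 0`,
where the Djrbashian–Caputo fractional derivative exists (the defining integral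
is well defined). -/
theorem mittagLeffler_solves_caputo_ode (α lam : ℝ) (hα0 : 0 < α) (hα1 : α < 1)
    (hlam : 0 ≤ lam) :
    (fun t : ℝ => mittagLefflerReal α (-(lam * t ^ α))) 0 = 1 ∧
    DifferentiableOn ℝ (fun t : ℝ => mittagLefflerReal α (-(lam * t ^ α))) (Set.Ioi 0) ∧
    ∀ t : ℝ, 0 < t →
      IntervalIntegrable
        (fun s => (t - s) ^ (-α) *
          deriv (fun r : ℝ => mittagLefflerReal α (-(lam * r ^ α))) s) volume 0 t ∧
      (1 / Real.Gamma (1 - α)) *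
          ∫ s in (0 : ℝ)..t, (t - s) ^ (-α) *
            deriv (fun r : ℝ => mittagLefflerReal α (-(lam * r ^ α))) s =
        -lam * mittagLefflerReal α (-(lam * t ^ α)) :=
  mittagLeffler_solves_caputo_ode_general α lam hα0 hα1
end
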